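/- arXiv:2409.10663 — 2 statements merged into one kernel-verified Lean document; each statement's English description precedes it below -/
import Mathlib

section
/- Let u ≥ 1 and x ≥ z^u with z > 1. Then the number of integers n ≤ x whose z-smooth part ∏_{p ≤ z, p^α ∥ n} p^α exceeds z^u is O(x·e^{−u/2}), with an absolute implied constant. -/
/-- The `z`-smooth part of `n`: the product of the prime powers `p ^ α` exactly
dividing `n` with `p ≤ z`. -/
noncomputable def smoothPart (z : ℝ) (n : ℕ) : ℕ :=
  ∏ p ∈ n.primeFactors.filter (fun p : ℕ => (p : ℝ) ≤ z), p ^ n.factorization p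

/-!
Rankin's method with exponent `s = 1 / (2 log z)`, for which `(z ^ u) ^ s = e ^ (u / 2)`:
the count is at most `e ^ (-u / 2) ∑_{n ≤ x} S(n) ^ s`, where `S(n)` is the `z`-smooth part.
Writing `S(n) ^ s = ∑_{d ∣ S(n)} h(d)` with `h = μ * (· ^ s) ≥ 0`, and noting that `d ∣ S(n)`
only for `z`-smooth `d ∣ n`, gives `∑_{n ≤ x} S(n) ^ s ≤ x ∑_{d smooth} h(d) / d`. The latter
is an Euler product over `p ≤ z` with factors `1 + (p ^ s - 1) / (p - p ^ s) ≤ 1 + 12 s log p / p`,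
and Mertens' bound `∑_{p ≤ z} log p / p ≤ 3 log z` makes the product at most `e ^ 18`.
-/

open Finset ArithmeticFunction
open scoped ArithmeticFunction.Moebius ArithmeticFunction.zeta

theorem smoothPart_dvd (z : ℝ) (n : ℕ) : smoothPart z n ∣ n := by
  rcases eq_or_ne n 0 with rfl | hn
  · exact dvd_zero _
  calc smoothPart z n ∣ ∏ p ∈ n.primeFactors, p ^ n.factorization p :=
        prod_dvd_prod_of_subset _ _ _ (filter_subset _ _)
    _ = n := Nat.prod_factorization_pow_eq_self hn

theorem smoothPart_mem_smoothNumbers (z : ℝ) (n : ℕ) :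
    smoothPart z n ∈ (⌊z⌋₊ + 1).smoothNumbers := by
  refine Nat.mem_smoothNumbers'.2 fun q hq hdvd => ?_
  obtain ⟨p, hp, hqp⟩ := hq.prime.exists_mem_finset_dvd hdvd
  obtain ⟨hpn, hpz⟩ := mem_filter.1 hp
  rw [(Nat.prime_dvd_prime_iff_eq hq (Nat.prime_of_mem_primeFactors hpn)).1
    (hq.dvd_of_dvd_pow hqp)]
  exact Nat.lt_succ_of_le (Nat.le_floor hpz)

namespace ArithmeticFunction

noncomputable def rpowNat (s : ℝ) : ArithmeticFunction ℝ :=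
  ⟨fun n => if n = 0 then 0 else (n : ℝ) ^ s, if_pos rfl⟩

theorem rpowNat_apply {s : ℝ} {n : ℕ} (hn : n ≠ 0) : rpowNat s n = (n : ℝ) ^ s := if_neg hn

theorem isMultiplicative_rpowNat (s : ℝ) : (rpowNat s).IsMultiplicative := by
  refine IsMultiplicative.iff_ne_zero.2 ⟨by simp [rpowNat_apply], fun hm hn _ => ?_⟩
  rw [rpowNat_apply (mul_ne_zero hm hn), rpowNat_apply hm, rpowNat_apply hn, Nat.cast_mul,
    Real.mul_rpow (Nat.cast_nonneg _) (Nat.cast_nonneg _)]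

noncomputable def rankinWeight (s : ℝ) : ArithmeticFunction ℝ := μ * rpowNat s

theorem isMultiplicative_rankinWeight (s : ℝ) : (rankinWeight s).IsMultiplicative :=
  isMultiplicative_moebius.intCast.mul (isMultiplicative_rpowNat s)

theorem sum_divisors_rankinWeight (s : ℝ) {n : ℕ} (hn : n ≠ 0) :
    ∑ d ∈ n.divisors, rankinWeight s d = (n : ℝ) ^ s := by
  rw [← coe_zeta_mul_apply, rankinWeight, ← mul_assoc, coe_zeta_mul_coe_moebius, one_mul,
    rpowNat_apply hn]

theorem rankinWeight_prime_pow_succ (s : ℝ) {p : ℕ} (hp : p.Prime) (a : ℕ) :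
    rankinWeight s (p ^ (a + 1)) = ((p : ℝ) ^ s) ^ (a + 1) - ((p : ℝ) ^ s) ^ a := by
  have hsum (k : ℕ) : ∑ i ∈ range (k + 1), rankinWeight s (p ^ i) = ((p : ℝ) ^ s) ^ k := by
    rw [← Nat.sum_divisors_prime_pow hp, sum_divisors_rankinWeight s (pow_ne_zero k hp.ne_zero),
      Nat.cast_pow, ← Real.rpow_natCast, ← Real.rpow_mul (Nat.cast_nonneg p), mul_comm,
      Real.rpow_mul (Nat.cast_nonneg p), Real.rpow_natCast]
  rw [← hsum (a + 1), ← hsum a, sum_range_succ _ (a + 1), add_sub_cancel_left]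

theorem rankinWeight_nonneg {s : ℝ} (hs : 0 ≤ s) (n : ℕ) : 0 ≤ rankinWeight s n := by
  rcases eq_or_ne n 0 with rfl | hn
  · simp
  rw [(isMultiplicative_rankinWeight s).multiplicative_factorization _ hn]
  refine prod_nonneg fun p hp => ?_
  have hp1 : 1 ≤ (p : ℝ) ^ s :=
    Real.one_le_rpow (by exact_mod_cast (Nat.prime_of_mem_primeFactors hp).one_le) hs
  cases n.factorization p with
  | zero => simp [(isMultiplicative_rankinWeight s).map_one]
  | succ a =>
    dsimp only
    rw [rankinWeight_prime_pow_succ s (Nat.prime_of_mem_primeFactors hp), sub_nonneg]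
    exact pow_le_pow_right₀ hp1 a.le_succ

theorem sum_Ioc_mul_zeta_le {f : ArithmeticFunction ℝ} (hf : ∀ n, 0 ≤ f n) (N : ℕ) :
    ∑ n ∈ Ioc 0 N, (f * ζ) n ≤ N * ∑ d ∈ Ioc 0 N, f d / d := by
  rw [sum_Ioc_mul_zeta_eq_sum, mul_sum]
  refine sum_le_sum fun d _ => ?_
  calc f d * ((N / d : ℕ) : ℝ) ≤ f d * (N / d) :=
        mul_le_mul_of_nonneg_left Nat.cast_div_le (hf d)
    _ = N * (f d / d) := by ring

-- Restricting to `N`-smooth numbers makes the Euler factors at primes `p ≥ N` trivial;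
-- unrestricted, they diverge when `p ^ s ≥ p`.
noncomputable def smoothRankinWeight (s : ℝ) (N : ℕ) : ArithmeticFunction ℝ :=
  ⟨N.smoothNumbers.indicator (rankinWeight s), by simp⟩

theorem smoothRankinWeight_apply (s : ℝ) (N n : ℕ) :
    smoothRankinWeight s N n = N.smoothNumbers.indicator (rankinWeight s) n := rfl

theorem smoothRankinWeight_nonneg {s : ℝ} (hs : 0 ≤ s) (N n : ℕ) :
    0 ≤ smoothRankinWeight s N n :=
  Set.indicator_nonneg (fun d _ => rankinWeight_nonneg hs d) n

theorem isMultiplicative_smoothRankinWeight (s : ℝ) (N : ℕ) :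
    (smoothRankinWeight s N).IsMultiplicative := by
  refine IsMultiplicative.iff_ne_zero.2 ⟨?_, fun {m n} _ _ hmn => ?_⟩
  · rw [smoothRankinWeight_apply, Set.indicator_of_mem (by simp [Nat.mem_smoothNumbers]),
      (isMultiplicative_rankinWeight s).map_one]
  simp only [smoothRankinWeight_apply]
  by_cases hm : m ∈ N.smoothNumbers
  · by_cases hn : n ∈ N.smoothNumbers
    · rw [Set.indicator_of_mem (Nat.mul_mem_smoothNumbers hm hn), Set.indicator_of_mem hm,
        Set.indicator_of_mem hn, (isMultiplicative_rankinWeight s).map_mul_of_coprime hmn]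
    · rw [Set.indicator_of_notMem hn, Set.indicator_of_notMem
        (fun h => hn (Nat.mem_smoothNumbers_of_dvd h (dvd_mul_left n m))), mul_zero]
  · rw [Set.indicator_of_notMem hm, Set.indicator_of_notMem
      (fun h => hm (Nat.mem_smoothNumbers_of_dvd h (dvd_mul_right m n))), zero_mul]

theorem rpow_le_smoothRankinWeight_mul_zeta {s : ℝ} (hs : 0 ≤ s) {N m n : ℕ} (hn : n ≠ 0)
    (hmn : m ∣ n) (hm : m ∈ N.smoothNumbers) :
    (m : ℝ) ^ s ≤ (smoothRankinWeight s N * ζ) n := by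
  rw [coe_mul_zeta_apply, ← sum_divisors_rankinWeight s (Nat.ne_zero_of_mem_smoothNumbers hm)]
  calc ∑ d ∈ m.divisors, rankinWeight s d = ∑ d ∈ m.divisors, smoothRankinWeight s N d :=
        sum_congr rfl fun d hd => (Set.indicator_of_mem
          (Nat.mem_smoothNumbers_of_dvd hm (Nat.dvd_of_mem_divisors hd)) _).symm
    _ ≤ ∑ d ∈ n.divisors, smoothRankinWeight s N d :=
        sum_le_sum_of_subset_of_nonneg (Nat.divisors_subset_of_dvd hn hmn)
          fun d _ _ => smoothRankinWeight_nonneg hs N d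

theorem hasSum_rankinWeight_prime_pow_div {s : ℝ} {p : ℕ} (hp : p.Prime)
    (hlt : (p : ℝ) ^ s < p) :
    HasSum (fun a => rankinWeight s (p ^ a) / (p ^ a : ℕ))
      (1 + ((p : ℝ) ^ s - 1) / (p - (p : ℝ) ^ s)) := by
  set t := (p : ℝ) ^ s with ht_def
  have hp0 : (0 : ℝ) < p := by exact_mod_cast hp.pos
  have ht : 0 < t := Real.rpow_pos_of_pos hp0 s
  have hterm (a : ℕ) :
      rankinWeight s (p ^ (a + 1)) / (p ^ (a + 1) : ℕ) = (t - 1) / p * (t / p) ^ a := by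
    rw [rankinWeight_prime_pow_succ s hp a, ← ht_def, Nat.cast_pow, div_pow]
    field_simp
    ring
  have hvalue : 1 + (t - 1) / (p - t) - ∑ i ∈ range 1, rankinWeight s (p ^ i) / (p ^ i : ℕ) =
      (t - 1) / p * (1 - t / p)⁻¹ := by
    have : (p : ℝ) - t ≠ 0 := (sub_pos.2 hlt).ne'
    simp only [range_one, sum_singleton, pow_zero, (isMultiplicative_rankinWeight s).map_one,
      Nat.cast_one, div_one, add_sub_cancel_left]
    field_simp
  rw [← hasSum_nat_add_iff' 1, hvalue]
  simpa only [hterm] using (hasSum_geometric_of_lt_one (div_nonneg ht.le hp0.le)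
    ((div_lt_one hp0).2 hlt)).mul_left ((t - 1) / p)

theorem smoothRankinWeight_prime_pow_of_mem_primesBelow (s : ℝ) {N p : ℕ}
    (hp : p ∈ N.primesBelow) (a : ℕ) :
    smoothRankinWeight s N (p ^ a) = rankinWeight s (p ^ a) := by
  obtain ⟨hpN, hp⟩ := Nat.mem_primesBelow.1 hp
  refine Set.indicator_of_mem (Nat.mem_smoothNumbers'.2 fun q hq hdvd => ?_) _
  rwa [(Nat.prime_dvd_prime_iff_eq hq hp).1 (hq.dvd_of_dvd_pow hdvd)]

theorem smoothRankinWeight_prime_pow_eq_zero (s : ℝ) {N p a : ℕ} (hp : p.Prime) (hNp : N ≤ p)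
    (ha : a ≠ 0) : smoothRankinWeight s N (p ^ a) = 0 :=
  Set.indicator_of_notMem
    (fun h => (Nat.mem_smoothNumbers'.1 h p hp (dvd_pow_self p ha)).not_ge hNp) _

theorem sum_Ioc_smoothRankinWeight_div_le {s : ℝ} (hs : 0 ≤ s) {N : ℕ}
    (hN : ∀ p ∈ N.primesBelow, (p : ℝ) ^ s < p) (X : ℕ) :
    ∑ d ∈ Ioc 0 X, smoothRankinWeight s N d / d ≤
      ∏ p ∈ N.primesBelow, (1 + ((p : ℝ) ^ s - 1) / (p - (p : ℝ) ^ s)) := by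
  set F := (smoothRankinWeight s N).pdiv (ArithmeticFunction.id : ArithmeticFunction ℕ)
  have hF (d : ℕ) : F d = smoothRankinWeight s N d / d := by simp [F]
  have hF_mult : F.IsMultiplicative :=
    (isMultiplicative_smoothRankinWeight s N).pdiv isMultiplicative_id.natCast
  have hF_nonneg (d : ℕ) : 0 ≤ F d :=
    hF d ▸ div_nonneg (smoothRankinWeight_nonneg hs N d) d.cast_nonneg
  have hF_support : Function.support F ⊆ N.smoothNumbers :=
    Function.support_subset_iff'.2 fun d hd => by
      rw [hF, smoothRankinWeight_apply, Set.indicator_of_notMem hd, zero_div]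
  have hprime : ∀ p ∈ N.primesBelow,
      HasSum (fun a => F (p ^ a)) (1 + ((p : ℝ) ^ s - 1) / (p - (p : ℝ) ^ s)) := fun p hp => by
    simpa only [hF, smoothRankinWeight_prime_pow_of_mem_primesBelow s hp] using
      hasSum_rankinWeight_prime_pow_div (Nat.prime_of_mem_primesBelow hp) (hN p hp)
  have hsummable {p : ℕ} (hp : p.Prime) : Summable fun a => ‖F (p ^ a)‖ := by
    simp_rw [Real.norm_of_nonneg (hF_nonneg _)]
    by_cases hpN : p < N
    · exact (hprime p (Nat.mem_primesBelow.2 ⟨hpN, hp⟩)).summable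
    refine summable_of_ne_finset_zero (s := {0}) fun a ha => ?_
    rw [hF, smoothRankinWeight_prime_pow_eq_zero s hp (not_lt.1 hpN) (by simpa using ha), zero_div]
  obtain ⟨-, hEuler⟩ := EulerProduct.summable_and_hasSum_smoothNumbers_prod_primesBelow_tsum
    hF_mult.map_one hF_mult.map_mul_of_coprime hsummable N
  rw [← Function.comp_def F, hasSum_subtype_iff_of_support_subset hF_support] at hEuler
  calc ∑ d ∈ Ioc 0 X, smoothRankinWeight s N d / d = ∑ d ∈ Ioc 0 X, F d := by simp only [hF]
    _ ≤ ∏ p ∈ N.primesBelow, ∑' a, F (p ^ a) :=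
        sum_le_hasSum _ (fun d _ => hF_nonneg d) hEuler
    _ = _ := prod_congr rfl fun p hp => (hprime p hp).tsum_eq

end ArithmeticFunction

theorem div_le_factorization_factorial {p : ℕ} (hp : p.Prime) (n : ℕ) :
    n / p ≤ n.factorial.factorization p := by
  rcases n.eq_zero_or_pos with rfl | hn
  · simp
  rw [Nat.factorization_factorial hp (Nat.lt_succ_of_le (Nat.log_le_self p n))]
  simpa using single_le_sum (f := fun i => n / p ^ i) (fun _ _ => Nat.zero_le _)
    (mem_Ico.2 ⟨le_rfl, Nat.succ_lt_succ hn⟩)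

theorem sum_primesLE_div_mul_log_le_log_factorial (n : ℕ) :
    ∑ p ∈ n.primesLE, ((n / p : ℕ) : ℝ) * Real.log p ≤ Real.log n.factorial := by
  rw [Real.log_nat_eq_sum_factorization, Finsupp.sum, Nat.support_factorization]
  calc ∑ p ∈ n.primesLE, ((n / p : ℕ) : ℝ) * Real.log p
      ≤ ∑ p ∈ n.primesLE, (n.factorial.factorization p : ℝ) * Real.log p := by
        refine sum_le_sum fun p hp => mul_le_mul_of_nonneg_right ?_ (Real.log_natCast_nonneg p)
        exact_mod_cast div_le_factorization_factorial (Nat.prime_of_mem_primesLE hp) n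
    _ ≤ ∑ p ∈ n.factorial.primeFactors, (n.factorial.factorization p : ℝ) * Real.log p := by
        refine sum_le_sum_of_subset_of_nonneg (fun p hp => ?_) fun p _ _ => by positivity
        exact Nat.mem_primeFactors.2 ⟨Nat.prime_of_mem_primesLE hp,
          Nat.dvd_factorial (Nat.prime_of_mem_primesLE hp).pos (Nat.le_of_mem_primesLE hp),
          Nat.factorial_ne_zero n⟩

theorem sum_primesLE_log_div_le (n : ℕ) :
    ∑ p ∈ n.primesLE, Real.log p / p ≤ Real.log n + Real.log 4 := by
  rcases n.eq_zero_or_pos with rfl | hn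
  · simp [Nat.primesLE_zero]
    positivity
  have hn' : (0 : ℝ) < n := by exact_mod_cast hn
  have hterm (p : ℕ) (hp : p ∈ n.primesLE) :
      n * (Real.log p / p) ≤ ((n / p : ℕ) + 1 : ℝ) * Real.log p := by
    have hp0 : (0 : ℝ) < p := by exact_mod_cast (Nat.prime_of_mem_primesLE hp).pos
    have : (n : ℝ) / p ≤ (n / p : ℕ) + 1 := by
      rw [← Nat.floor_div_eq_div (K := ℝ)]
      exact (Nat.lt_floor_add_one _).le
    calc (n : ℝ) * (Real.log p / p) = n / p * Real.log p := by ring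
      _ ≤ _ := mul_le_mul_of_nonneg_right this (Real.log_natCast_nonneg p)
  have hfact : Real.log n.factorial ≤ n * Real.log n := by
    rw [← Real.log_pow]
    exact Real.log_le_log (by positivity) (by exact_mod_cast Nat.factorial_le_pow n)
  have htheta : ∑ p ∈ n.primesLE, Real.log p ≤ Real.log 4 * n := by
    rw [← Chebyshev.theta_eq_sum_primesLE_log]
    exact Chebyshev.theta_le_log4_mul_x (Nat.cast_nonneg n)
  refine le_of_mul_le_mul_left ?_ hn'
  calc (n : ℝ) * ∑ p ∈ n.primesLE, Real.log p / p
      ≤ ∑ p ∈ n.primesLE, ((n / p : ℕ) + 1 : ℝ) * Real.log p := by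
        rw [mul_sum]; exact sum_le_sum hterm
    _ = ∑ p ∈ n.primesLE, ((n / p : ℕ) : ℝ) * Real.log p +
          ∑ p ∈ n.primesLE, Real.log p := by
        simp only [add_mul, one_mul, sum_add_distrib]
    _ ≤ n * (Real.log n + Real.log 4) := by
        linarith [sum_primesLE_div_mul_log_le_log_factorial n]

theorem sum_primesLE_log_div_le_three_mul_log (n : ℕ) :
    ∑ p ∈ n.primesLE, Real.log p / p ≤ 3 * Real.log n := by
  rcases lt_or_ge n 2 with hn | hn
  · interval_cases n <;> simp [Nat.primesLE_zero, Nat.primesLE_one]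
  have hlog4 : Real.log 4 ≤ 2 * Real.log n := by
    rw [show (4 : ℝ) = 2 ^ 2 by norm_num, Real.log_pow, Nat.cast_ofNat]
    gcongr
    exact_mod_cast hn
  linarith [sum_primesLE_log_div_le n]

theorem exp_one_half_lt : Real.exp (1 / 2) < 1.7 := by
  have h := Real.exp_one_lt_d9
  have hsq : Real.exp (1 / 2) * Real.exp (1 / 2) = Real.exp 1 := by
    rw [← Real.exp_add]; norm_num
  nlinarith [Real.exp_pos (1 / 2 : ℝ)]

theorem rpow_lt_of_mul_log_le_half {p s : ℝ} (hp : 0 < p) (hsp : s * Real.log p ≤ 1 / 2) :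
    p ^ s < 1.7 := by
  rw [Real.rpow_def_of_pos hp, mul_comm]
  exact (Real.exp_le_exp.2 hsp).trans_lt exp_one_half_lt

theorem rpow_sub_one_div_sub_rpow_le {p s : ℝ} (hp : 2 ≤ p) (hs : 0 ≤ s)
    (hsp : s * Real.log p ≤ 1 / 2) :
    (p ^ s - 1) / (p - p ^ s) ≤ 12 * s * (Real.log p / p) := by
  have hp0 : 0 < p := by linarith
  have ht := rpow_lt_of_mul_log_le_half hp0 hsp
  have htpos : 0 < p ^ s := Real.rpow_pos_of_pos hp0 s
  have hlog : 0 ≤ s * Real.log p := mul_nonneg hs (Real.log_nonneg (by linarith))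
  have hsub : p ^ s - 1 ≤ p ^ s * (s * Real.log p) := by
    have := Real.one_sub_inv_le_log_of_pos htpos
    rw [Real.log_rpow hp0] at this
    have : p ^ s * (1 - (p ^ s)⁻¹) = p ^ s - 1 := by field_simp
    nlinarith
  rw [div_le_iff₀ (by linarith), mul_div_assoc', div_mul_eq_mul_div, le_div_iff₀ hp0]
  nlinarith [mul_nonneg (mul_nonneg (sub_nonneg.2 ht.le) hlog) hp0.le,
    mul_nonneg hlog (sub_nonneg.2 hp), mul_le_mul_of_nonneg_right hsub hp0.le]

theorem sum_rpow_smoothPart_le {z : ℝ} (hz : 1 < z) (X : ℕ) :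
    ∑ n ∈ Ioc 0 X, (smoothPart z n : ℝ) ^ (1 / (2 * Real.log z)) ≤ Real.exp 18 * X := by
  set s := 1 / (2 * Real.log z) with hs_def
  have hlogz : 0 < Real.log z := Real.log_pos hz
  have hs : 0 ≤ s := by positivity
  have hslog : s * Real.log z = 1 / 2 := by
    rw [hs_def]
    field_simp
  have hprimes (p : ℕ) (hp : p ∈ (⌊z⌋₊ + 1).primesBelow) :
      (2 : ℝ) ≤ p ∧ s * Real.log p ≤ 1 / 2 := by
    obtain ⟨hpz, hp⟩ := Nat.mem_primesBelow.1 hp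
    have hpz : (p : ℝ) ≤ z := (Nat.le_floor_iff (by linarith)).1 (Nat.lt_succ_iff.1 hpz)
    refine ⟨by exact_mod_cast hp.two_le, hslog ▸ ?_⟩
    exact mul_le_mul_of_nonneg_left (Real.log_le_log (by exact_mod_cast hp.pos) hpz) hs
  have hmertens : 12 * s * ∑ p ∈ (⌊z⌋₊ + 1).primesBelow, Real.log p / p ≤ 18 := by
    have hfloor : 0 < ⌊z⌋₊ := Nat.floor_pos.2 hz.le
    calc _ ≤ 12 * s * (3 * Real.log z) := by
          gcongr
          refine (sum_primesLE_log_div_le_three_mul_log _).trans ?_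
          gcongr
          exact Nat.floor_le (by linarith)
      _ = 18 := by linear_combination 36 * hslog
  calc ∑ n ∈ Ioc 0 X, (smoothPart z n : ℝ) ^ s
      ≤ ∑ n ∈ Ioc 0 X, (smoothRankinWeight s (⌊z⌋₊ + 1) * ζ) n :=
        sum_le_sum fun n hn => rpow_le_smoothRankinWeight_mul_zeta hs (mem_Ioc.1 hn).1.ne'
          (smoothPart_dvd z n) (smoothPart_mem_smoothNumbers z n)
    _ ≤ X * ∑ d ∈ Ioc 0 X, smoothRankinWeight s (⌊z⌋₊ + 1) d / d :=
        sum_Ioc_mul_zeta_le (smoothRankinWeight_nonneg hs _) X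
    _ ≤ X * ∏ p ∈ (⌊z⌋₊ + 1).primesBelow,
          (1 + ((p : ℝ) ^ s - 1) / (p - (p : ℝ) ^ s)) := by
        gcongr
        refine sum_Ioc_smoothRankinWeight_div_le hs (fun p hp => ?_) X
        have := rpow_lt_of_mul_log_le_half (by linarith [hprimes p hp]) (hprimes p hp).2
        linarith [hprimes p hp]
    _ ≤ X * ∏ p ∈ (⌊z⌋₊ + 1).primesBelow, Real.exp (12 * s * (Real.log p / p)) := by
        refine mul_le_mul_of_nonneg_left (prod_le_prod (fun p hp => ?_) fun p hp => ?_)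
          (Nat.cast_nonneg X) <;> obtain ⟨hp2, hsp⟩ := hprimes p hp
        · have := rpow_lt_of_mul_log_le_half (by linarith) hsp
          have : 1 ≤ (p : ℝ) ^ s := Real.one_le_rpow (by linarith) hs
          exact add_nonneg zero_le_one (div_nonneg (by linarith) (by linarith))
        · linarith [rpow_sub_one_div_sub_rpow_le hp2 hs hsp,
            Real.add_one_le_exp (12 * s * (Real.log p / p))]
    _ = X * Real.exp (12 * s * ∑ p ∈ (⌊z⌋₊ + 1).primesBelow, Real.log p / p) := by
        rw [mul_sum, Real.exp_sum]
    _ ≤ Real.exp 18 * X := by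
        rw [mul_comm]
        gcongr

theorem stmt_4 :
    ∃ C : ℝ, 0 < C ∧ ∀ (u x z : ℝ), 1 ≤ u → 1 < z → z ^ u ≤ x →
      (((Finset.Icc 1 ⌊x⌋₊).filter
          (fun n : ℕ => z ^ u < (smoothPart z n : ℝ))).card : ℝ)
        ≤ C * x * Real.exp (-u / 2) := by
  refine ⟨Real.exp 18, Real.exp_pos 18, fun u x z _ hz hzx => ?_⟩
  have hzu : 0 < z ^ u := Real.rpow_pos_of_pos (by linarith) u
  have hs : 0 ≤ 1 / (2 * Real.log z) := by have := Real.log_pos hz; positivity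
  have hzus : (z ^ u) ^ (1 / (2 * Real.log z)) = Real.exp (u / 2) := by
    rw [← Real.rpow_mul (by linarith), Real.rpow_def_of_pos (by linarith)]
    field_simp [(Real.log_pos hz).ne']
  have hrankin : (((Icc 1 ⌊x⌋₊).filter fun n => z ^ u < (smoothPart z n : ℝ)).card : ℝ) *
      Real.exp (u / 2) ≤
        ∑ n ∈ Ioc 0 ⌊x⌋₊, (smoothPart z n : ℝ) ^ (1 / (2 * Real.log z)) := by
    rw [← hzus, ← Icc_add_one_left_eq_Ioc, ← nsmul_eq_mul, ← sum_const]
    refine (sum_le_sum fun n hn => ?_).trans (sum_le_sum_of_subset_of_nonneg (filter_subset _ _)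
      fun n _ _ => by positivity)
    exact Real.rpow_le_rpow hzu.le (mem_filter.1 hn).2.le hs
  have hcount := hrankin.trans ((sum_rpow_smoothPart_le hz _).trans
    (mul_le_mul_of_nonneg_left (Nat.floor_le (by linarith)) (Real.exp_pos 18).le))
  calc _ = (((Icc 1 ⌊x⌋₊).filter fun n => z ^ u < (smoothPart z n : ℝ)).card : ℝ) *
        Real.exp (u / 2) * Real.exp (-u / 2) := by
        rw [mul_assoc, ← Real.exp_add, show u / 2 + -u / 2 = 0 by ring, Real.exp_zero, mul_one]
    _ ≤ Real.exp 18 * x * Real.exp (-u / 2) := by gcongr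
end

section
/- Let λ be the Liouville function, χ a quadratic Dirichlet character mod q, z > 1, and let λ_z be the completely multiplicative function with λ_z(p) = λ(p) for primes p ≤ z and λ_z(p) = χ(p) for primes p > z. Then for x > z, Σ_{n ≤ x} |λ(n) − λ_z(n)| ≪ x·Σ_{z < p ≤ x} (1 + χ(p))/p + x/z, with an absolute implied constant. -/
/-- The Liouville function `λ(n) = (-1)^Ω(n)`. -/
noncomputable def liouville (n : ℕ) : ℝ := (-1) ^ (Nat.primeFactorsList n).length

/-!
`λ` and `λ_z` agree at every prime `p ≤ z` and at every prime `p > z` with `χ(p) = -1`, so by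
complete multiplicativity they agree at every `n` without an exceptional prime factor, one with
`p > z` and `χ(p) ∈ {0, 1}`. Such `n ≤ x` number at most `∑ ⌊x/p⌋ ≤ x ∑_{z < p ≤ x} (1 + χ(p))/p`, and at
each of them `|λ(n) - λ_z(n)| ≤ 2`.
-/

open Finset

lemma liouville_one : liouville 1 = 1 := by
  simp [liouville]

lemma liouville_prime {p : ℕ} (hp : p.Prime) : liouville p = -1 := by
  simp [liouville, Nat.primeFactorsList_prime hp]

lemma liouville_mul {m n : ℕ} (hm : m ≠ 0) (hn : n ≠ 0) :
    liouville (m * n) = liouville m * liouville n := by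
  rw [liouville, (Nat.perm_primeFactorsList_mul hm hn).length_eq, List.length_append, pow_add]
  rfl

lemma abs_liouville (n : ℕ) : |liouville n| = 1 := by
  simp [liouville]

section CompletelyMultiplicative

variable {R : Type*}

lemma Nat.apply_eq_of_forall_prime_dvd [Mul R] {f g : ℕ → R} (h1 : f 1 = g 1)
    (hf : ∀ m n, m ≠ 0 → n ≠ 0 → f (m * n) = f m * f n)
    (hg : ∀ m n, m ≠ 0 → n ≠ 0 → g (m * n) = g m * g n) {n : ℕ} (hn : n ≠ 0)
    (hp : ∀ p, p.Prime → p ∣ n → f p = g p) : f n = g n := by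
  induction n using Nat.recOnMul with
  | zero => exact absurd rfl hn
  | one => exact h1
  | prime p hp' => exact hp p hp' dvd_rfl
  | mul a b iha ihb =>
    obtain ⟨ha, hb⟩ := mul_ne_zero_iff.mp hn
    rw [hf a b ha hb, hg a b ha hb,
      iha ha fun p hp' hpa => hp p hp' (hpa.mul_right b),
      ihb hb fun p hp' hpb => hp p hp' (hpb.mul_left a)]

lemma Nat.abs_apply_le_one_of_prime [Ring R] [LinearOrder R] [IsOrderedRing R] {f : ℕ → R}
    (h1 : f 1 = 1) (hf : ∀ m n, f (m * n) = f m * f n) (hp : ∀ p, p.Prime → |f p| ≤ 1)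
    {n : ℕ} (hn : n ≠ 0) : |f n| ≤ 1 := by
  induction n using Nat.recOnMul with
  | zero => exact absurd rfl hn
  | one => rw [h1, abs_one]
  | prime p hp' => exact hp p hp'
  | mul a b iha ihb =>
    obtain ⟨ha, hb⟩ := mul_ne_zero_iff.mp hn
    rw [hf, abs_mul]
    exact mul_le_one₀ (iha ha) (abs_nonneg _) (ihb hb)

end CompletelyMultiplicative

lemma Finset.sum_abs_sub_le_two_mul_card_filter_ne {ι : Type*} (s : Finset ι) {f g : ι → ℝ}
    (hf : ∀ i ∈ s, |f i| ≤ 1) (hg : ∀ i ∈ s, |g i| ≤ 1) :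
    ∑ i ∈ s, |f i - g i| ≤ 2 * #{i ∈ s | f i ≠ g i} := by
  calc ∑ i ∈ s, |f i - g i| = ∑ i ∈ s with f i ≠ g i, |f i - g i| := by
        rw [sum_filter_of_ne]
        intro i _ hne heq
        exact hne (by rw [heq, sub_self, abs_zero])
    _ ≤ ∑ i ∈ s with f i ≠ g i, (2 : ℝ) := by
        refine sum_le_sum fun i hi => ?_
        have hi := (mem_filter.mp hi).1
        linarith [abs_sub (f i) (g i), hf i hi, hg i hi]
    _ = 2 * #{i ∈ s | f i ≠ g i} := by rw [sum_const, nsmul_eq_mul, mul_comm]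

lemma Nat.card_filter_exists_dvd_le (N : ℕ) (T : Finset ℕ) :
    #{n ∈ Icc 1 N | ∃ p ∈ T, p ∣ n} ≤ ∑ p ∈ T, N / p := by
  calc #{n ∈ Icc 1 N | ∃ p ∈ T, p ∣ n} ≤ #(T.biUnion fun p => {n ∈ Ioc 0 N | p ∣ n}) := by
        refine card_le_card fun n hn => ?_
        obtain ⟨hnN, p, hpT, hpn⟩ := mem_filter.mp hn
        exact mem_biUnion.mpr ⟨p, hpT, mem_filter.mpr ⟨hnN, hpn⟩⟩
    _ ≤ ∑ p ∈ T, #{n ∈ Ioc 0 N | p ∣ n} := card_biUnion_le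
    _ = ∑ p ∈ T, N / p := by simp only [Nat.Ioc_filter_dvd_card_eq_div]

section TwistedLiouville

variable {q : ℕ} {χ : DirichletCharacter ℝ q} {z : ℝ} {lamz : ℕ → ℝ}
  (hsmall : ∀ p : ℕ, p.Prime → (p : ℝ) ≤ z → lamz p = liouville p)
  (hlarge : ∀ p : ℕ, p.Prime → z < (p : ℝ) → lamz p = χ (p : ZMod q))
include hsmall hlarge

lemma abs_apply_prime_le_one_of_isQuadratic (hχ : χ.IsQuadratic) {p : ℕ} (hp : p.Prime) :
    |lamz p| ≤ 1 := by
  rcases le_or_gt (p : ℝ) z with hpz | hpz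
  · rw [hsmall p hp hpz, abs_liouville]
  · rw [hlarge p hp hpz]
    rcases hχ (p : ZMod q) with h | h | h <;> simp [h]

lemma apply_prime_eq_liouville_of_not_exceptional {p : ℕ} (hp : p.Prime)
    (hpχ : z < p → χ (p : ZMod q) = -1) : lamz p = liouville p := by
  rcases le_or_gt (p : ℝ) z with hpz | hpz
  · exact hsmall p hp hpz
  · rw [hlarge p hp hpz, hpχ hpz, liouville_prime hp]

lemma apply_eq_liouville_of_not_exceptional (hone : lamz 1 = 1)
    (hmul : ∀ m n : ℕ, lamz (m * n) = lamz m * lamz n) {n : ℕ} (hn : n ≠ 0)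
    (hnχ : ∀ p, p.Prime → p ∣ n → z < p → χ (p : ZMod q) = -1) : lamz n = liouville n :=
  Nat.apply_eq_of_forall_prime_dvd (hone.trans liouville_one.symm) (fun m n _ _ => hmul m n)
    (fun _ _ => liouville_mul) hn fun p hp hpn =>
      apply_prime_eq_liouville_of_not_exceptional hsmall hlarge hp (hnχ p hp hpn)

end TwistedLiouville

lemma DirichletCharacter.sum_floor_div_le_of_isQuadratic {q : ℕ} {χ : DirichletCharacter ℝ q}
    (hχ : χ.IsQuadratic) {x : ℝ} (hx : 0 ≤ x) (T : Finset ℕ) :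
    ∑ p ∈ T.filter (fun p : ℕ => χ (p : ZMod q) ≠ -1), ((⌊x⌋₊ / p : ℕ) : ℝ) ≤
      x * ∑ p ∈ T, (1 + χ (p : ZMod q)) / p := by
  have hnonneg : ∀ p ∈ T, 0 ≤ x * ((1 + χ (p : ZMod q)) / p) := fun p _ => by
    have : 0 ≤ 1 + χ (p : ZMod q) := by rcases hχ (p : ZMod q) with h | h | h <;> simp [h]
    positivity
  rw [mul_sum]
  calc ∑ p ∈ T.filter (fun p : ℕ => χ (p : ZMod q) ≠ -1), ((⌊x⌋₊ / p : ℕ) : ℝ)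
      ≤ ∑ p ∈ T.filter (fun p : ℕ => χ (p : ZMod q) ≠ -1), x * ((1 + χ (p : ZMod q)) / p) := by
        refine sum_le_sum fun p hp => ?_
        have hχp : 1 ≤ 1 + χ (p : ZMod q) := by
          rcases hχ (p : ZMod q) with h | h | h <;> simp_all
        calc ((⌊x⌋₊ / p : ℕ) : ℝ) ≤ x / p := by
              grw [Nat.cast_div_le, Nat.floor_le hx]
          _ = x * (1 / p) := by ring
          _ ≤ x * ((1 + χ (p : ZMod q)) / p) := by gcongr
    _ ≤ ∑ p ∈ T, x * ((1 + χ (p : ZMod q)) / p) :=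
        sum_le_sum_of_subset_of_nonneg (filter_subset _ _) fun p hp _ => hnonneg p hp

theorem stmt_13 :
    ∃ C : ℝ, 0 < C ∧
      ∀ (q : ℕ) (χ : DirichletCharacter ℝ q) (_hq : 1 ≤ q) (_hχ : χ ^ 2 = 1)
        (z : ℝ) (_hz : 1 < z) (lamz : ℕ → ℝ)
        (_hone : lamz 1 = 1)
        (_hmul : ∀ m n : ℕ, lamz (m * n) = lamz m * lamz n)
        (_hsmall : ∀ p : ℕ, p.Prime → (p : ℝ) ≤ z → lamz p = liouville p)
        (_hlarge : ∀ p : ℕ, p.Prime → z < (p : ℝ) → lamz p = χ (p : ZMod q))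
        (x : ℝ) (_hx : z < x),
        ∑ n ∈ Finset.Icc 1 ⌊x⌋₊, |liouville n - lamz n| ≤
          C * (x * ∑ p ∈ (Finset.Icc 1 ⌊x⌋₊).filter
                (fun p : ℕ => p.Prime ∧ z < (p : ℝ)),
              (1 + χ (p : ZMod q)) / (p : ℝ)
            + x / z) := by
  refine ⟨2, two_pos, fun q χ _ hχ z hz lamz hone hmul hsmall hlarge x hx => ?_⟩
  have hquad : χ.IsQuadratic := MulChar.isQuadratic_iff_sq_eq_one.mpr hχ
  set N := ⌊x⌋₊
  set P := (Icc 1 N).filter (fun p : ℕ => p.Prime ∧ z < (p : ℝ))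
  set E := P.filter (fun p : ℕ => χ (p : ZMod q) ≠ -1)
  have hdiff : {n ∈ Icc 1 N | liouville n ≠ lamz n} ⊆ {n ∈ Icc 1 N | ∃ p ∈ E, p ∣ n} := by
    refine monotone_filter_right _ fun n hn hne => ?_
    obtain ⟨hn1, hnN⟩ := mem_Icc.mp hn
    by_contra! hE
    refine hne (apply_eq_liouville_of_not_exceptional hsmall hlarge hone hmul
      (by omega) fun p hp hpn hpz => ?_).symm
    by_contra hpχ
    have hpN : p ≤ N := (Nat.le_of_dvd hn1 hpn).trans hnN
    exact hE p (by simp [E, P, hp, hpz, hpχ, hp.one_le, hpN]) hpn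
  calc ∑ n ∈ Icc 1 N, |liouville n - lamz n|
      ≤ 2 * #{n ∈ Icc 1 N | liouville n ≠ lamz n} :=
        sum_abs_sub_le_two_mul_card_filter_ne _ (fun n _ => (abs_liouville n).le) fun n hn =>
          Nat.abs_apply_le_one_of_prime hone hmul
            (fun _ => abs_apply_prime_le_one_of_isQuadratic hsmall hlarge hquad)
            (by grind)
    _ ≤ 2 * #{n ∈ Icc 1 N | ∃ p ∈ E, p ∣ n} := by gcongr 2 * (#?_ : ℝ)
    _ ≤ 2 * ∑ p ∈ E, ((N / p : ℕ) : ℝ) := by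
        gcongr
        exact_mod_cast Nat.card_filter_exists_dvd_le N E
    _ ≤ 2 * (x * ∑ p ∈ P, (1 + χ (p : ZMod q)) / p) := by
        gcongr
        exact DirichletCharacter.sum_floor_div_le_of_isQuadratic hquad (by linarith) P
    _ ≤ 2 * (x * ∑ p ∈ P, (1 + χ (p : ZMod q)) / p + x / z) := by
        gcongr
        exact le_add_of_nonneg_right (div_nonneg (by linarith) (by linarith))
end
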